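/- Let π: ℝ → ℝ be bounded measurable and χ(t) = ∫_{-∞}^{t} e^{−(t−s)} π(s) ds. If (τ_n) is a sequence of reals such that π(t + τ_n) → π(t) as n → ∞ uniformly on each interval [γ, β] for every γ < β, then χ(t + τ_n) → χ(t) uniformly on every compact interval [α, β]. -/
import Mathlib

open MeasureTheory Filter

/-- `χ(t) = ∫_{-∞}^t e^{-(t-s)} π(s) ds`. -/
noncomputable def chi (π : ℝ → ℝ) (t : ℝ) : ℝ :=
  ∫ s in Set.Iic t, Real.exp (-(t - s)) * π s

lemma ker_integrable {f : ℝ → ℝ} {M : ℝ} (hmeas : Measurable f)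
    (hbd : ∀ t, |f t| ≤ M) (t c : ℝ) :
    IntegrableOn (fun s => Real.exp (-(t - s)) * f s) (Set.Iic c) := by
  have h1 : (fun s => Real.exp (-(t - s)) * f s)
      = fun s => Real.exp (-t) * (Real.exp s * f s) := by
    funext s; rw [show -(t - s) = -t + s by ring, Real.exp_add]; ring
  rw [h1]
  apply Integrable.const_mul
  apply Integrable.mono' ((integrableOn_exp_Iic c).const_mul M)
  · exact (Real.measurable_exp.mul hmeas).aestronglyMeasurable
  · filter_upwards with s
    rw [norm_mul, Real.norm_eq_abs, Real.norm_eq_abs, Real.abs_exp]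
    nlinarith [Real.exp_pos s, hbd s, abs_nonneg (f s)]

lemma ker_int (t c : ℝ) : IntegrableOn (fun s => Real.exp (-(t - s))) (Set.Iic c) := by
  have h1 : (fun s => Real.exp (-(t - s))) = fun s => Real.exp (-t) * Real.exp s := by
    funext s; rw [show -(t - s) = -t + s by ring, Real.exp_add]
  rw [h1]; exact (integrableOn_exp_Iic c).const_mul _

lemma int_ker (t c : ℝ) : ∫ s in Set.Iic c, Real.exp (-(t - s)) = Real.exp (c - t) := by
  have h1 : (fun s => Real.exp (-(t - s))) = fun s => Real.exp (-t) * Real.exp s := by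
    funext s; rw [show -(t - s) = -t + s by ring, Real.exp_add]
  rw [h1, integral_const_mul, integral_exp_Iic, ← Real.exp_add]; ring_nf

lemma chi_shift (π : ℝ → ℝ) (t τ : ℝ) :
    chi π (t + τ) = ∫ s in Set.Iic t, Real.exp (-(t - s)) * π (s + τ) := by
  rw [chi, ← integral_indicator measurableSet_Iic, ← integral_indicator measurableSet_Iic,
    ← MeasureTheory.integral_add_right_eq_self
      ((Set.Iic (t + τ)).indicator fun s => Real.exp (-(t + τ - s)) * π s) τ]
  congr 1; funext s
  by_cases h : s ≤ t
  · rw [Set.indicator_of_mem (by simpa using h), Set.indicator_of_mem (by simpa using h)]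
    ring_nf
  · rw [Set.indicator_of_notMem (by simpa using h),
      Set.indicator_of_notMem (by simpa using h)]

/-- If `π(· + τ_n) → π` uniformly on each interval `[γ, β]`, then
`χ(· + τ_n) → χ` uniformly on every compact interval `[α, β]`. -/
theorem chi_uniform_limit (π : ℝ → ℝ) (M : ℝ)
    (hmeas : Measurable π) (hbd : ∀ t, |π t| ≤ M) (τ : ℕ → ℝ)
    (hπ : ∀ γ β : ℝ, γ < β →
      TendstoUniformlyOn (fun n t => π (t + τ n)) π atTop (Set.Icc γ β)) :
    ∀ α β : ℝ,
      TendstoUniformlyOn (fun n t => chi π (t + τ n)) (chi π) atTop (Set.Icc α β) := by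
  have hM : 0 ≤ M := le_trans (abs_nonneg _) (hbd 0)
  intro α β
  rcases lt_or_ge β α with hba | hab
  · rw [Set.Icc_eq_empty (not_le.mpr hba)]; exact tendstoUniformlyOn_empty
  rw [Metric.tendstoUniformlyOn_iff]
  intro ε hε
  set A : ℝ := max 1 (Real.log (4 * (M + 1) / ε)) with hAdef
  have hA1 : 1 ≤ A := le_max_left _ _
  have hc : 0 < 4 * (M + 1) / ε := by positivity
  have hAexp : Real.exp (-A) ≤ ε / (4 * (M + 1)) := by
    rw [Real.exp_neg, show ε / (4 * (M + 1)) = (4 * (M + 1) / ε)⁻¹ by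
      rw [inv_div]]
    apply inv_anti₀ hc
    calc 4 * (M + 1) / ε = Real.exp (Real.log (4 * (M + 1) / ε)) := (Real.exp_log hc).symm
      _ ≤ Real.exp A := Real.exp_le_exp.mpr (le_max_right _ _)
  have hγ : α - A < β := by linarith
  have key := Metric.tendstoUniformlyOn_iff.mp (hπ (α - A) β hγ) (ε / 4) (by positivity)
  filter_upwards [key] with n hn t ht
  obtain ⟨htα, htβ⟩ := ht
  set d : ℝ → ℝ := fun s => π (s + τ n) - π s with hd
  have hdmeas : Measurable d := (hmeas.comp (measurable_add_const _)).sub hmeas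
  have hdbd : ∀ s, |d s| ≤ 2 * M := by
    intro s
    calc |d s| ≤ |π (s + τ n)| + |π s| := abs_sub _ _
      _ ≤ 2 * M := by linarith [hbd (s + τ n), hbd s]
  have hI1 : IntegrableOn (fun s => Real.exp (-(t - s)) * π (s + τ n)) (Set.Iic t) :=
    ker_integrable (hmeas.comp (measurable_add_const _)) (fun s => hbd _) t t
  have hI2 := ker_integrable hmeas hbd t t
  have hId := ker_integrable hdmeas hdbd t t
  have hdiff : chi π (t + τ n) - chi π t
      = ∫ s in Set.Iic t, Real.exp (-(t - s)) * d s := by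
    rw [chi_shift, chi, ← integral_sub hI1 hI2]
    congr 1; funext s; simp only [hd]; ring
  rw [Real.dist_eq, abs_sub_comm, hdiff]
  have hta : t - A ≤ t := by linarith
  have hsub1 : Set.Iic (t - A) ⊆ Set.Iic t := Set.Iic_subset_Iic.mpr hta
  have hsub2 : Set.Ioc (t - A) t ⊆ Set.Iic t := Set.Ioc_subset_Iic_self
  have hsplit : Set.Iic t = Set.Iic (t - A) ∪ Set.Ioc (t - A) t :=
    (Set.Iic_union_Ioc_eq_Iic hta).symm
  have step1 : |∫ s in Set.Iic t, Real.exp (-(t - s)) * d s|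
      ≤ ∫ s in Set.Iic t, ‖Real.exp (-(t - s)) * d s‖ := by
    exact (Real.norm_eq_abs _ ▸ norm_integral_le_integral_norm _)
  have step2 : (∫ s in Set.Iic t, ‖Real.exp (-(t - s)) * d s‖)
      = (∫ s in Set.Iic (t - A), ‖Real.exp (-(t - s)) * d s‖)
        + ∫ s in Set.Ioc (t - A) t, ‖Real.exp (-(t - s)) * d s‖ := by
    rw [hsplit]
    exact setIntegral_union (Set.Iic_disjoint_Ioc le_rfl) measurableSet_Ioc
      ((hId.mono_set hsub1).norm) ((hId.mono_set hsub2).norm)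
  have bound1 : (∫ s in Set.Iic (t - A), ‖Real.exp (-(t - s)) * d s‖)
      ≤ 2 * M * Real.exp (-A) := by
    have hb : (∫ s in Set.Iic (t - A), 2 * M * Real.exp (-(t - s)))
        = 2 * M * Real.exp (-A) := by
      rw [integral_const_mul, int_ker, show t - A - t = -A by ring]
    rw [← hb]
    apply setIntegral_mono_on ((hId.mono_set hsub1).norm)
      ((ker_int t (t - A)).const_mul _) measurableSet_Iic
    intro s _
    rw [norm_mul, Real.norm_eq_abs, Real.norm_eq_abs, Real.abs_exp]
    nlinarith [Real.exp_pos (-(t - s)), hdbd s, abs_nonneg (d s)]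
  have bound2 : (∫ s in Set.Ioc (t - A) t, ‖Real.exp (-(t - s)) * d s‖) ≤ ε / 4 := by
    have h1 : (∫ s in Set.Ioc (t - A) t, ‖Real.exp (-(t - s)) * d s‖)
        ≤ ∫ s in Set.Ioc (t - A) t, (ε / 4) * Real.exp (-(t - s)) := by
      apply setIntegral_mono_on ((hId.mono_set hsub2).norm)
        (((ker_int t t).mono_set hsub2).const_mul _) measurableSet_Ioc
      intro s hs
      have hsmem : s ∈ Set.Icc (α - A) β := ⟨by linarith [hs.1], le_trans hs.2 htβ⟩
      have := hn s hsmem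
      rw [Real.dist_eq] at this
      have hds : |d s| ≤ ε / 4 := by
        rw [hd, abs_sub_comm]; exact le_of_lt this
      rw [norm_mul, Real.norm_eq_abs, Real.norm_eq_abs, Real.abs_exp]
      nlinarith [Real.exp_pos (-(t - s)), abs_nonneg (d s)]
    have h2 : (∫ s in Set.Ioc (t - A) t, (ε / 4) * Real.exp (-(t - s)))
        ≤ ∫ s in Set.Iic t, (ε / 4) * Real.exp (-(t - s)) := by
      apply setIntegral_mono_set ((ker_int t t).const_mul _)
      · filter_upwards with s; positivity
      · exact Filter.Eventually.of_forall hsub2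
    have h3 : (∫ s in Set.Iic t, (ε / 4) * Real.exp (-(t - s))) = ε / 4 := by
      rw [integral_const_mul, int_ker, sub_self, Real.exp_zero, mul_one]
    linarith
  have hfin : 2 * M * Real.exp (-A) ≤ ε / 2 := by
    have h4 : 2 * M * Real.exp (-A) ≤ 2 * M * (ε / (4 * (M + 1))) := by
      apply mul_le_mul_of_nonneg_left hAexp (by linarith)
    have hpos : (0:ℝ) < 4 * (M + 1) := by positivity
    have h5 : 2 * M * (ε / (4 * (M + 1))) ≤ ε / 2 := by
      rw [show 2 * M * (ε / (4 * (M + 1))) = 2 * M * ε / (4 * (M + 1)) by ring,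
        div_le_div_iff₀ hpos two_pos]
      nlinarith
    linarith
  calc |∫ s in Set.Iic t, Real.exp (-(t - s)) * d s|
      ≤ 2 * M * Real.exp (-A) + ε / 4 := by
        rw [step2] at step1; linarith
    _ < ε := by linarith
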